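/- Price of anarchy lower bound: suppose buyer 1 is a strict monopsonist at the initial node 0 = (0,0), i.e. f_1(0) = T with T ≥ 1. Then OPT(0) = Σ_{i=1}^{T} v_1(i), and for every integer k with κ_1(0) ≤ k ≤ T, Σ_{i=1}^{k} v_1(i) + Σ_{i=1}^{T−k} v_2(i) ≥ (1 − 1/e)·Σ_{i=1}^{T} v_1(i); that is, every allocation awarding buyer 1 at least her greedy demand κ_1(0) items achieves social welfare at least (1 − 1/e) times the optimal social welfare. -/

import Mathlib

open Finset

noncomputable section

/-- The opponent of buyer `i`. -/
def other (i : Fin 2) : Fin 2 := 1 - i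

/-- The standard unit vector of buyer `i`: winning one item moves `x` to `x + e i`. -/
def e (i : Fin 2) : Fin 2 → ℕ := Pi.single i 1

/-- Remaining supply `t(x) = T - x₁ - x₂` at node `x`. -/
def supply (T : ℕ) (x : Fin 2 → ℕ) : ℕ := T - (x 0 + x 1)

/-- `x` is a decision node: `x₁ + x₂ < T`. -/
def IsDecision (T : ℕ) (x : Fin 2 → ℕ) : Prop := x 0 + x 1 < T

/-- Incremental value `v_i(k|x) = v_i(x_i + k)`. -/
def val (v : Fin 2 → ℕ → ℝ) (i : Fin 2) (k : ℕ) (x : Fin 2 → ℕ) : ℝ := v i (x i + k)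

/-- Valuations are nonnegative and weakly decreasing. -/
def Admissible (v : Fin 2 → ℕ → ℝ) : Prop := ∀ i k, 0 ≤ v i k ∧ v i (k + 1) ≤ v i k

/-- Greedy payoff `μ̄_i(k|x) = Σ_{j=1}^k v_i(j|x) - k · v_{-i}(t-k+1|x)`. -/
def gbar (T : ℕ) (v : Fin 2 → ℕ → ℝ) (i : Fin 2) (k : ℕ) (x : Fin 2 → ℕ) : ℝ :=
  (∑ j ∈ Finset.Icc 1 k, val v i j x) - (k : ℝ) * val v (other i) (supply T x - k + 1) x

/-- Greedy utility `μ_i(x) = max_{0 ≤ k ≤ t} μ̄_i(k|x)` (equal to `0` at terminal nodes). -/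
def gu (T : ℕ) (v : Fin 2 → ℕ → ℝ) (i : Fin 2) (x : Fin 2 → ℕ) : ℝ :=
  Finset.sup' (Finset.range (supply T x + 1)) ⟨0, Finset.mem_range.mpr (Nat.succ_pos _)⟩
    (fun k => gbar T v i k x)

/-- Greedy demand `κ_i(x)`: the least `k ∈ {0,…,t}` attaining the greedy utility. -/
def gd (T : ℕ) (v : Fin 2 → ℕ → ℝ) (i : Fin 2) (x : Fin 2 → ℕ) : ℕ :=
  sInf {k | k ≤ supply T x ∧ gbar T v i k x = gu T v i x}

/-- Duopsony factor `f_i(x) = max ({k ∈ {1,…,t} : v_i(k|x) > v_{-i}(t-k+1|x)} ∪ {0})`. -/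
def df (T : ℕ) (v : Fin 2 → ℕ → ℝ) (i : Fin 2) (x : Fin 2 → ℕ) : ℕ :=
  sSup {k | 1 ≤ k ∧ k ≤ supply T x ∧
    val v (other i) (supply T x - k + 1) x < val v i k x}

/-- Baseline price `β_i(x)`. -/
def base (T : ℕ) (v : Fin 2 → ℕ → ℝ) (i : Fin 2) (x : Fin 2 → ℕ) : ℝ :=
  if df T v i x = 0 then val v i 1 x
  else val v (other i) (supply T x - gd T v i x + 1) x

/-- Threshold price `p_i(x) = v_i(1|x) + μ_i(x+e_i) - μ_i(x+e_{-i})`. -/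
def tp (T : ℕ) (v : Fin 2 → ℕ → ℝ) (i : Fin 2) (x : Fin 2 → ℕ) : ℝ :=
  val v i 1 x + gu T v i (x + e i) - gu T v i (x + e (other i))

/-- Social welfare of awarding `k` of the `t` remaining items to buyer 1. -/
def sw (T : ℕ) (v : Fin 2 → ℕ → ℝ) (k : ℕ) (x : Fin 2 → ℕ) : ℝ :=
  (∑ i ∈ Finset.Icc 1 k, val v 0 i x) + (∑ i ∈ Finset.Icc 1 (supply T x - k), val v 1 i x)

/-- Optimal social welfare `OPT(x) = max_{0 ≤ k ≤ t} SW(k|x)`. -/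
def opt (T : ℕ) (v : Fin 2 → ℕ → ℝ) (x : Fin 2 → ℕ) : ℝ :=
  Finset.sup' (Finset.range (supply T x + 1)) ⟨0, Finset.mem_range.mpr (Nat.succ_pos _)⟩
    (fun k => sw T v k x)


/-!
At the initial node buyer 1 faces the price `p j = v₂(T - j + 1)` for her `j`-th item, and strict
monopsony means `p j < v₁(j)` for every `j ≤ T`: giving her all items is optimal, and welfare
only grows with her share. Writing `W` for the partial sums of `v₁`, her greedy demand `c`
maximises `W j - j p j`, so `W j - W c ≤ j p j` for `j > c`. Concavity of `W` gives
`W j - W c ≥ (j - c) / (T - c) * (W T - W c)`, hence buyer 2 contributes at least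
`(1 - c / (T - c) * ∑_{c < j ≤ T} 1 / j) (W T - W c)`; finally
`c ∑_{c < j ≤ T} 1 / j ≤ c log (T / c) ≤ T / e`.
-/

lemma Icc_one_eq_Ioc_zero (n : ℕ) : Icc 1 n = Ioc 0 n := Icc_add_one_left_eq_Ioc 0 n

lemma sum_Icc_one_sub_eq_sum_Ioc {M : Type*} [AddCommMonoid M] (f : ℕ → M) {k T : ℕ} (hk : k ≤ T) :
    ∑ i ∈ Icc 1 (T - k), f i = ∑ j ∈ Ioc k T, f (T - j + 1) := by
  refine sum_nbij' (fun i => T - i + 1) (fun j => T - j + 1) ?_ ?_ ?_ ?_ ?_ <;> intro i hi <;> grind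

lemma Antitone.sub_mul_sum_Ioc_le {f : ℕ → ℝ} (hf : Antitone f) {c j T : ℕ} (hcj : c ≤ j)
    (hjT : j ≤ T) :
    ((j : ℝ) - c) * ∑ i ∈ Ioc c T, f i ≤ ((T : ℝ) - c) * ∑ i ∈ Ioc c j, f i := by
  have hhead : ((j : ℝ) - c) * f (j + 1) ≤ ∑ i ∈ Ioc c j, f i := by
    simpa [Nat.cast_sub hcj] using
      card_nsmul_le_sum (Ioc c j) f (f (j + 1)) fun i hi => hf (by grind)
  have htail : ∑ i ∈ Ioc j T, f i ≤ ((T : ℝ) - j) * f (j + 1) := by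
    simpa [Nat.cast_sub hjT] using
      sum_le_card_nsmul (Ioc j T) f (f (j + 1)) fun i hi => hf (by grind)
  have hjc : (0 : ℝ) ≤ j - c := sub_nonneg.2 (by exact_mod_cast hcj)
  have hTj : (0 : ℝ) ≤ T - j := sub_nonneg.2 (by exact_mod_cast hjT)
  rw [← sum_Ioc_consecutive f hcj hjT]
  nlinarith [mul_le_mul_of_nonneg_left htail hjc, mul_le_mul_of_nonneg_left hhead hTj]

lemma sum_Ioc_inv_le_log_sub_log {c n : ℕ} (hc : 1 ≤ c) (hcn : c ≤ n) :
    ∑ j ∈ Ioc c n, (j : ℝ)⁻¹ ≤ Real.log n - Real.log c := by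
  induction n, hcn using Nat.le_induction with
  | base => simp
  | succ n hcn ih =>
    have hn : (0 : ℝ) < n := by exact_mod_cast hc.trans hcn
    have hstep := Real.one_sub_inv_le_log_of_pos (x := (n + 1 : ℝ) / n) (by positivity)
    rw [inv_div, Real.log_div (by positivity) hn.ne'] at hstep
    have hinv : 1 - (n : ℝ) / (n + 1) = ((n + 1 : ℕ) : ℝ)⁻¹ := by push_cast; field_simp; ring
    rw [sum_Ioc_succ_top hcn]
    push_cast at hinv ⊢
    linarith

lemma mul_sum_Ioc_inv_le_div_exp {c T : ℕ} (hcT : c ≤ T) :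
    (c : ℝ) * ∑ j ∈ Ioc c T, (j : ℝ)⁻¹ ≤ T / Real.exp 1 := by
  rcases Nat.eq_zero_or_pos c with rfl | hc
  · simp only [CharP.cast_eq_zero, zero_mul]; positivity
  have hc0 : (0 : ℝ) < c := by exact_mod_cast hc
  have hT0 : (0 : ℝ) < T := by exact_mod_cast hc.trans_le hcT
  -- `log y ≤ y / e` for `y = T / c`
  have hlog := Real.log_le_sub_one_of_pos (x := T / (c * Real.exp 1)) (by positivity)
  rw [Real.log_div hT0.ne' (by positivity), Real.log_mul hc0.ne' (by positivity),
    Real.log_exp] at hlog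
  calc (c : ℝ) * ∑ j ∈ Ioc c T, (j : ℝ)⁻¹ ≤ c * (Real.log T - Real.log c) :=
        mul_le_mul_of_nonneg_left (sum_Ioc_inv_le_log_sub_log hc hcT) hc0.le
    _ ≤ c * (T / (c * Real.exp 1)) := mul_le_mul_of_nonneg_left (by linarith) hc0.le
    _ = T / Real.exp 1 := by have := Real.exp_pos 1; field_simp

lemma sum_Ioc_add_sum_Ioc_le_of_le {a p : ℕ → ℝ} {c k T : ℕ} (hck : c ≤ k) (hkT : k ≤ T)
    (hpa : ∀ j ∈ Ioc c k, p j ≤ a j) :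
    ∑ i ∈ Ioc 0 c, a i + ∑ j ∈ Ioc c T, p j ≤ ∑ i ∈ Ioc 0 k, a i + ∑ j ∈ Ioc k T, p j := by
  rw [← sum_Ioc_consecutive a (Nat.zero_le c) hck, ← sum_Ioc_consecutive p hck hkT]
  linarith [sum_le_sum hpa]

theorem one_sub_inv_exp_mul_sum_le {a p : ℕ → ℝ} (ha : Antitone a) (ha0 : ∀ i, 0 ≤ a i)
    {c T : ℕ} (hcT : c ≤ T) (hp : ∀ j ∈ Ioc c T, ∑ i ∈ Ioc c j, a i ≤ j * p j) :
    (1 - 1 / Real.exp 1) * ∑ i ∈ Ioc 0 T, a i ≤ ∑ i ∈ Ioc 0 c, a i + ∑ j ∈ Ioc c T, p j := by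
  set W := ∑ i ∈ Ioc 0 c, a i
  set D := ∑ i ∈ Ioc c T, a i
  have hW : 0 ≤ W := sum_nonneg fun i _ => ha0 i
  have hD : 0 ≤ D := sum_nonneg fun i _ => ha0 i
  rw [← sum_Ioc_consecutive a (Nat.zero_le c) hcT]
  rcases hcT.eq_or_lt with rfl | hcT'
  · simp only [Ioc_self, sum_empty, add_zero]
    nlinarith [show 0 < 1 / Real.exp 1 by positivity]
  have hTc : (0 : ℝ) < T - c := sub_pos.2 (by exact_mod_cast hcT')
  have hprice : ∀ j ∈ Ioc c T, (1 - (c : ℝ) * (j : ℝ)⁻¹) * D ≤ (T - c) * p j := by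
    intro j hj
    obtain ⟨hcj, hjT⟩ := mem_Ioc.1 hj
    have hj0 : (0 : ℝ) < j := by exact_mod_cast (Nat.zero_le c).trans_lt hcj
    have hkey : ((j : ℝ) - c) * D ≤ j * ((T - c) * p j) :=
      calc ((j : ℝ) - c) * D ≤ (T - c) * ∑ i ∈ Ioc c j, a i := ha.sub_mul_sum_Ioc_le hcj.le hjT
        _ ≤ (T - c) * (j * p j) := mul_le_mul_of_nonneg_left (hp j hj) hTc.le
        _ = j * ((T - c) * p j) := by ring
    have hrw : (1 - (c : ℝ) * (j : ℝ)⁻¹) * D = (j - c) * D / j := by field_simp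
    rw [hrw, div_le_iff₀ hj0]
    linarith
  have hsum : ((T - c) - c * ∑ j ∈ Ioc c T, (j : ℝ)⁻¹) * D ≤ (T - c) * ∑ j ∈ Ioc c T, p j := by
    have := sum_le_sum hprice
    rw [← sum_mul, ← mul_sum, sum_sub_distrib, ← mul_sum] at this
    simpa [Nat.cast_sub hcT] using this
  have hharm := mul_le_mul_of_nonneg_right (mul_sum_Ioc_inv_le_div_exp hcT) hD
  have hhead : (c : ℝ) * D ≤ (T - c) * W := by
    have := ha.sub_mul_sum_Ioc_le (Nat.zero_le c) hcT
    rw [← sum_Ioc_consecutive a (Nat.zero_le c) hcT] at this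
    push_cast at this
    nlinarith
  -- after `hsum` and `hharm`, what remains is `hhead` scaled by `1 / e`
  rw [← mul_le_mul_iff_right₀ hTc]
  have he : 0 < Real.exp 1 := Real.exp_pos 1
  have : (T : ℝ) / Real.exp 1 * D = T * D * (1 / Real.exp 1) := by ring
  nlinarith [mul_le_mul_of_nonneg_left hhead (one_div_pos.2 he).le]

section Game

variable {T : ℕ} {v : Fin 2 → ℕ → ℝ} {i : Fin 2} {x : Fin 2 → ℕ}

lemma Admissible.antitone (hv : Admissible v) (j : Fin 2) : Antitone (v j) :=
  antitone_nat_of_succ_le fun n => (hv j n).2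

lemma gd_mem :
    gd T v i x ∈ {k | k ≤ supply T x ∧ gbar T v i k x = gu T v i x} := by
  obtain ⟨m, hm, hmax⟩ := exists_mem_eq_sup' nonempty_range_add_one fun k => gbar T v i k x
  exact Nat.sInf_mem ⟨m, Nat.lt_succ_iff.1 (mem_range.1 hm), hmax.symm⟩

lemma gd_le_supply : gd T v i x ≤ supply T x := gd_mem.1

lemma gbar_le_gbar_gd {k : ℕ} (hk : k ≤ supply T x) :
    gbar T v i k x ≤ gbar T v i (gd T v i x) x := by
  rw [gd_mem.2]
  exact le_sup' (fun k => gbar T v i k x) (mem_range.2 (Nat.lt_succ_of_le hk))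

lemma val_other_lt_val_of_df_eq_supply (hv : Admissible v) (hdf : df T v i x = supply T x)
    {k : ℕ} (hk : 1 ≤ k) (hkt : k ≤ supply T x) :
    val v (other i) (supply T x - k + 1) x < val v i k x := by
  set S := {k | 1 ≤ k ∧ k ≤ supply T x ∧ val v (other i) (supply T x - k + 1) x < val v i k x}
  have hsup : sSup S = supply T x := hdf
  have hS : S.Nonempty := Set.nonempty_iff_ne_empty.2 fun hS => by
    rw [hS, csSup_empty] at hsup; simp only [Nat.bot_eq_zero] at hsup; omega
  have htop : supply T x ∈ S := hsup ▸ Nat.sSup_mem hS ⟨supply T x, fun k hk => hk.2.1⟩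
  calc val v (other i) (supply T x - k + 1) x ≤ val v (other i) 1 x :=
        hv.antitone _ (Nat.add_le_add_left (by omega) _)
    _ < val v i (supply T x) x := by simpa using htop.2.2
    _ ≤ val v i k x := hv.antitone _ (Nat.add_le_add_left (by omega) _)

@[simp] lemma supply_zero (T : ℕ) : supply T 0 = T := by simp [supply]

@[simp] lemma val_zero (v : Fin 2 → ℕ → ℝ) (i : Fin 2) (k : ℕ) : val v i k 0 = v i k := by
  simp [_root_.val]

@[simp] lemma other_zero : other 0 = 1 := rfl

lemma le_of_df_zero_eq (hv : Admissible v) (hdf : df T v i 0 = T) {j : ℕ} (hj : j ∈ Ioc 0 T) :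
    v (other i) (T - j + 1) ≤ v i j := by
  obtain ⟨hj1, hjT⟩ := mem_Ioc.1 hj
  simpa using (val_other_lt_val_of_df_eq_supply hv (x := 0) (by simpa using hdf) hj1
    (by simpa using hjT)).le

lemma gbar_zero (T : ℕ) (v : Fin 2 → ℕ → ℝ) (i : Fin 2) (k : ℕ) :
    gbar T v i k 0 = ∑ j ∈ Icc 1 k, v i j - k * v (other i) (T - k + 1) := by
  simp [gbar]

lemma sw_zero (T : ℕ) (v : Fin 2 → ℕ → ℝ) (k : ℕ) :
    sw T v k 0 = ∑ i ∈ Icc 1 k, v 0 i + ∑ i ∈ Icc 1 (T - k), v 1 i := by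
  simp [sw]

lemma sum_Ioc_gd_le_mul (hv : Admissible v) {j : ℕ} (hj : j ∈ Ioc (gd T v i 0) T) :
    ∑ k ∈ Ioc (gd T v i 0) j, v i k ≤ j * v (other i) (T - j + 1) := by
  obtain ⟨hcj, hjT⟩ := mem_Ioc.1 hj
  have hmax : gbar T v i j 0 ≤ gbar T v i (gd T v i 0) 0 := gbar_le_gbar_gd (by simpa using hjT)
  rw [gbar_zero, gbar_zero, Icc_one_eq_Ioc_zero, Icc_one_eq_Ioc_zero,
    ← sum_Ioc_consecutive _ (Nat.zero_le _) hcj.le] at hmax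
  have hgd : 0 ≤ (gd T v i 0 : ℝ) * v (other i) (T - gd T v i 0 + 1) :=
    mul_nonneg (Nat.cast_nonneg _) (hv _ _).1
  linarith

lemma sw_zero_eq (T : ℕ) (v : Fin 2 → ℕ → ℝ) {k : ℕ} (hk : k ≤ T) :
    sw T v k 0 = ∑ i ∈ Ioc 0 k, v 0 i + ∑ j ∈ Ioc k T, v 1 (T - j + 1) := by
  rw [sw_zero, sum_Icc_one_sub_eq_sum_Ioc _ hk, Icc_one_eq_Ioc_zero]

lemma opt_zero_eq (hv : Admissible v) (hdf : df T v 0 0 = T) :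
    opt T v 0 = ∑ i ∈ Ioc 0 T, v 0 i := by
  refine le_antisymm (sup'_le _ _ fun k hk => ?_) (le_sup'_of_le _ (b := T) (by simp) ?_)
  · rw [mem_range, supply_zero, Nat.lt_succ_iff] at hk
    simpa [sw_zero_eq T v hk] using sum_Ioc_add_sum_Ioc_le_of_le hk le_rfl fun j hj =>
      le_of_df_zero_eq hv hdf (Ioc_subset_Ioc_left (Nat.zero_le k) hj)
  · simp [sw_zero_eq T v le_rfl]

end Game

theorem stmt18_general (T : ℕ) (v : Fin 2 → ℕ → ℝ) (hv : Admissible v)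
    (hmono : df T v 0 (0 : Fin 2 → ℕ) = T) :
    opt T v (0 : Fin 2 → ℕ) = (∑ i ∈ Finset.Icc 1 T, v 0 i) ∧
    (∀ k : ℕ, gd T v 0 (0 : Fin 2 → ℕ) ≤ k → k ≤ T →
      (1 - 1 / Real.exp 1) * (∑ i ∈ Finset.Icc 1 T, v 0 i)
        ≤ (∑ i ∈ Finset.Icc 1 k, v 0 i) + (∑ i ∈ Finset.Icc 1 (T - k), v 1 i)) := by
  have hcT : gd T v 0 0 ≤ T := by simpa using gd_le_supply (T := T) (v := v) (i := 0) (x := 0)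
  simp only [Icc_one_eq_Ioc_zero T]
  refine ⟨opt_zero_eq hv hmono, fun k hck hkT => ?_⟩
  rw [← sw_zero, sw_zero_eq T v hkT]
  calc (1 - 1 / Real.exp 1) * ∑ i ∈ Ioc 0 T, v 0 i
      ≤ ∑ i ∈ Ioc 0 (gd T v 0 0), v 0 i + ∑ j ∈ Ioc (gd T v 0 0) T, v 1 (T - j + 1) :=
        one_sub_inv_exp_mul_sum_le (hv.antitone 0) (fun i => (hv 0 i).1) hcT
          fun j hj => sum_Ioc_gd_le_mul hv hj
    _ ≤ ∑ i ∈ Ioc 0 k, v 0 i + ∑ j ∈ Ioc k T, v 1 (T - j + 1) :=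
        sum_Ioc_add_sum_Ioc_le_of_le hck hkT fun j hj =>
          le_of_df_zero_eq hv hmono (Ioc_subset_Ioc (Nat.zero_le _) hkT hj)

/-- Price of anarchy lower bound: if buyer 1 is a strict monopsonist at the initial
node, every allocation awarding her at least her greedy demand achieves social
welfare at least `(1 - 1/e)` times the optimum. -/
theorem stmt18 (T : ℕ) (v : Fin 2 → ℕ → ℝ) (hv : Admissible v) (hT : 1 ≤ T)
    (hmono : df T v 0 (0 : Fin 2 → ℕ) = T) :
    opt T v (0 : Fin 2 → ℕ) = (∑ i ∈ Finset.Icc 1 T, v 0 i) ∧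
    (∀ k : ℕ, gd T v 0 (0 : Fin 2 → ℕ) ≤ k → k ≤ T →
      (1 - 1 / Real.exp 1) * (∑ i ∈ Finset.Icc 1 T, v 0 i)
        ≤ (∑ i ∈ Finset.Icc 1 k, v 0 i) + (∑ i ∈ Finset.Icc 1 (T - k), v 1 i)) :=
  stmt18_general T v hv hmono
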